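/- Let 0 < q < 1, γ ≥ 0, and M ≥ 1 an integer. Let (τ_{j,r}) for j ∈ {1,…,M}, r ≥ 1 be i.i.d. random variables with the exponential distribution of rate 1, and let N take values in {1, 2, 3, …} with P(N = m) = q^{m−1}(1−q), independent of the τ's. Set W_r = Σ_{j=1}^{M} max(γ, τ_{j,r}) and α = Σ_{r=1}^{N} W_r. Then (E[α²]/2)/E[α] = [γ²/2 + (γ+1)e^{−γ}]/(γ + e^{−γ}) + ((M−1)/2 + Mq/(1−q))·(γ + e^{−γ}). -/

import Mathlib

/-!
For a single truncated exponential `X = max γ τ` one computes `E[X] = γ + e^{-γ}` and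
`E[X²] = γ² + 2(γ + 1)e^{-γ}` by splitting the exponential density at `γ`. An epoch of `n`
rounds is a sum `Sₙ` of `nM` independent copies of `X`, so `E[Sₙ] = nM E[X]` and, variances of
independent summands being additive, `E[Sₙ²] = nM Var X + (nM E[X])²`. As `N` is independent of
the `τ`'s, `E[α^k] = ∑ₙ P(N = n) E[Sₙ^k]`, and the geometric moments `E[N] = 1/(1-q)`,
`E[N²] = (1+q)/(1-q)²` turn both moments of `α` into closed forms whose ratio is the claimed
age.
-/

open MeasureTheory ProbabilityTheory
open Real Set Filter Topology
open scoped ENNReal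

section ExponentialMoments

variable {r : ℝ}

lemma measurable_exponentialPDF : Measurable (exponentialPDF r) :=
  (measurable_exponentialPDFReal r).ennreal_ofReal

lemma expMeasure_eq_withDensity : expMeasure r = volume.withDensity (exponentialPDF r) := rfl

lemma exponentialPDF_toReal_smul_eq_indicator (hr : 0 < r) (g : ℝ → ℝ) (x : ℝ) :
    (exponentialPDF r x).toReal • g x
      = (Ici 0).indicator (fun x => r * exp (-(r * x)) * g x) x := by
  rcases le_or_gt 0 x with hx | hx
  · rw [exponentialPDF_of_nonneg hx, ENNReal.toReal_ofReal (by positivity),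
      indicator_of_mem (mem_Ici.2 hx), smul_eq_mul]
  · simp [exponentialPDF_of_neg hx, indicator_of_notMem (notMem_Ici.2 hx)]

lemma integral_expMeasure (hr : 0 < r) (g : ℝ → ℝ) :
    ∫ x, g x ∂expMeasure r = ∫ x in Ioi 0, r * exp (-(r * x)) * g x := by
  rw [expMeasure_eq_withDensity,
    integral_withDensity_eq_integral_toReal_smul measurable_exponentialPDF
      (ae_of_all _ fun _ => ENNReal.ofReal_lt_top),
    ← integral_Ici_eq_integral_Ioi, ← integral_indicator measurableSet_Ici]
  simp_rw [exponentialPDF_toReal_smul_eq_indicator hr]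

lemma integrable_expMeasure_iff (hr : 0 < r) {g : ℝ → ℝ} :
    Integrable g (expMeasure r) ↔ IntegrableOn (fun x => r * exp (-(r * x)) * g x) (Ioi 0) := by
  rw [expMeasure_eq_withDensity,
    integrable_withDensity_iff_integrable_smul' measurable_exponentialPDF
      (ae_of_all _ fun _ => ENNReal.ofReal_lt_top), ← integrableOn_Ici_iff_integrableOn_Ioi,
    ← integrable_indicator_iff measurableSet_Ici]
  simp_rw [exponentialPDF_toReal_smul_eq_indicator hr]

lemma integral_Ioc_zero_mul_exp_neg_mul {γ : ℝ} (hγ : 0 ≤ γ) :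
    ∫ x in Ioc 0 γ, r * exp (-(r * x)) = 1 - exp (-(r * γ)) := by
  rw [← intervalIntegral.integral_of_le hγ,
    intervalIntegral.integral_eq_sub_of_hasDerivAt (fun x _ => hasDerivAt_neg_exp_mul_exp)
      ((by fun_prop : Continuous fun x => r * exp (-(r * x))).intervalIntegrable _ _)]
  simp only [mul_zero, neg_zero, exp_zero]
  ring

lemma integral_comp_max_expMeasure (hr : 0 < r) {γ : ℝ} (hγ : 0 ≤ γ) {h : ℝ → ℝ}
    (hh : IntegrableOn (fun x => r * exp (-(r * x)) * h x) (Ioi γ)) :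
    Integrable (fun x => h (max γ x)) (expMeasure r) ∧
      ∫ x, h (max γ x) ∂expMeasure r
        = (1 - exp (-(r * γ))) * h γ + ∫ x in Ioi γ, r * exp (-(r * x)) * h x := by
  have hbelow : EqOn (fun x => r * exp (-(r * x)) * h (max γ x))
      (fun x => r * exp (-(r * x)) * h γ) (Ioc 0 γ) := fun x hx => by
    simp only [max_eq_left hx.2]
  have habove : EqOn (fun x => r * exp (-(r * x)) * h (max γ x))
      (fun x => r * exp (-(r * x)) * h x) (Ioi γ) := fun x hx => by
    simp only [max_eq_right (le_of_lt (mem_Ioi.1 hx))]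
  have hint_below : IntegrableOn (fun x => r * exp (-(r * x)) * h (max γ x)) (Ioc 0 γ) :=
    ((by fun_prop : Continuous fun x => r * exp (-(r * x)) * h γ).integrableOn_Ioc).congr_fun
      hbelow.symm measurableSet_Ioc
  have hint_above : IntegrableOn (fun x => r * exp (-(r * x)) * h (max γ x)) (Ioi γ) :=
    hh.congr_fun habove.symm measurableSet_Ioi
  rw [integrable_expMeasure_iff hr, integral_expMeasure hr, ← Ioc_union_Ioi_eq_Ioi hγ,
    setIntegral_union (Ioc_disjoint_Ioi le_rfl) measurableSet_Ioi hint_below hint_above,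
    setIntegral_congr_fun measurableSet_Ioc hbelow, setIntegral_congr_fun measurableSet_Ioi habove,
    integral_mul_const, integral_Ioc_zero_mul_exp_neg_mul hγ]
  exact ⟨hint_below.union hint_above, rfl⟩

lemma integral_Ioi_exp_neg_mul_self {γ : ℝ} (hγ : 0 ≤ γ) :
    IntegrableOn (fun x => exp (-x) * x) (Ioi γ) ∧
      ∫ x in Ioi γ, exp (-x) * x = (γ + 1) * exp (-γ) := by
  have hderiv : ∀ x ∈ Ici γ, HasDerivAt (fun y => -((y + 1) * exp (-y))) (exp (-x) * x) x :=
    fun x _ => (((hasDerivAt_id' x).add_const 1).mul (hasDerivAt_neg x).exp).neg.congr_deriv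
        (by ring)
  have hpos : ∀ x ∈ Ioi γ, 0 ≤ exp (-x) * x := fun x hx =>
    mul_nonneg (exp_nonneg _) (hγ.trans (le_of_lt hx))
  have hlim : Tendsto (fun y => -((y + 1) * exp (-y))) atTop (𝓝 0) := by
    simpa [add_mul] using ((tendsto_pow_mul_exp_neg_atTop_nhds_zero 1).add
      (tendsto_pow_mul_exp_neg_atTop_nhds_zero 0)).neg
  refine ⟨integrableOn_Ioi_deriv_of_nonneg' hderiv hpos hlim, ?_⟩
  rw [integral_Ioi_of_hasDerivAt_of_nonneg' hderiv hpos hlim]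
  ring

lemma integral_Ioi_exp_neg_mul_sq {γ : ℝ} :
    IntegrableOn (fun x => exp (-x) * x ^ 2) (Ioi γ) ∧
      ∫ x in Ioi γ, exp (-x) * x ^ 2 = (γ ^ 2 + 2 * γ + 2) * exp (-γ) := by
  have hderiv : ∀ x ∈ Ici γ,
      HasDerivAt (fun y => -((y ^ 2 + 2 * y + 2) * exp (-y))) (exp (-x) * x ^ 2) x :=
    fun x _ => ((((hasDerivAt_pow 2 x).add ((hasDerivAt_id' x).const_mul 2)).add_const 2).mul
        (hasDerivAt_neg x).exp).neg.congr_deriv (by simp only [Pi.add_apply]; ring)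
  have hpos : ∀ x ∈ Ioi γ, 0 ≤ exp (-x) * x ^ 2 := fun x _ =>
    mul_nonneg (exp_nonneg _) (sq_nonneg x)
  have hlim : Tendsto (fun y => -((y ^ 2 + 2 * y + 2) * exp (-y))) atTop (𝓝 0) := by
    simpa [add_mul, mul_assoc] using (((tendsto_pow_mul_exp_neg_atTop_nhds_zero 2).add
      ((tendsto_pow_mul_exp_neg_atTop_nhds_zero 1).const_mul 2)).add
      ((tendsto_pow_mul_exp_neg_atTop_nhds_zero 0).const_mul 2)).neg
  refine ⟨integrableOn_Ioi_deriv_of_nonneg' hderiv hpos hlim, ?_⟩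
  rw [integral_Ioi_of_hasDerivAt_of_nonneg' hderiv hpos hlim]
  ring

lemma integral_max_expMeasure_one {γ : ℝ} (hγ : 0 ≤ γ) :
    ∫ x, max γ x ∂expMeasure 1 = γ + exp (-γ) := by
  obtain ⟨hint, hval⟩ := integral_Ioi_exp_neg_mul_self hγ
  have hval_max := (integral_comp_max_expMeasure one_pos hγ (h := fun x => x)
    (by simpa only [one_mul] using hint)).2
  simp only [one_mul] at hval_max
  rw [hval_max, hval]
  ring

lemma integral_max_sq_expMeasure_one {γ : ℝ} (hγ : 0 ≤ γ) :
    Integrable (fun x => max γ x ^ 2) (expMeasure 1) ∧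
      ∫ x, max γ x ^ 2 ∂expMeasure 1 = γ ^ 2 + 2 * (γ + 1) * exp (-γ) := by
  obtain ⟨hint, hval⟩ := integral_Ioi_exp_neg_mul_sq (γ := γ)
  obtain ⟨hint_max, hval_max⟩ := integral_comp_max_expMeasure one_pos hγ (h := fun x => x ^ 2)
    (by simpa only [one_mul] using hint)
  refine ⟨hint_max, ?_⟩
  simp only [one_mul] at hval_max
  rw [hval_max, hval]
  ring

end ExponentialMoments

section GeometricMoments

variable {q : ℝ}

lemma hasSum_mul_succ_geometric (hq : ‖q‖ < 1) :
    HasSum (fun n : ℕ => q ^ n * (1 - q) * ((n : ℝ) + 1)) (1 / (1 - q)) := by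
  have hq1 : 1 - q ≠ 0 := sub_ne_zero.2 (ne_of_lt (lt_of_abs_lt hq)).symm
  rw [show 1 / (1 - q) = (1 - q) * (1 / (1 - q) ^ (1 + 1)) by field_simp]
  refine ((hasSum_choose_mul_geometric_of_norm_lt_one 1 hq).mul_left (1 - q)).congr_fun
    fun n => ?_
  rw [Nat.choose_one_right]
  push_cast
  ring

lemma hasSum_mul_succ_sq_geometric (hq : ‖q‖ < 1) :
    HasSum (fun n : ℕ => q ^ n * (1 - q) * ((n : ℝ) + 1) ^ 2) ((1 + q) / (1 - q) ^ 2) := by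
  have hq1 : 1 - q ≠ 0 := sub_ne_zero.2 (ne_of_lt (lt_of_abs_lt hq)).symm
  -- `(n + 1)² = 2 * (n + 2).choose 2 - (n + 1)`
  rw [show (1 + q) / (1 - q) ^ 2 = 2 * (1 - q) * (1 / (1 - q) ^ (2 + 1)) - 1 / (1 - q) by
    field_simp; ring]
  refine (((hasSum_choose_mul_geometric_of_norm_lt_one 2 hq).mul_left (2 * (1 - q))).sub
    (hasSum_mul_succ_geometric hq)).congr_fun fun n => ?_
  rw [Nat.cast_choose_two]
  push_cast
  ring

end GeometricMoments

section Independence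

variable {Ω : Type*} {mΩ : MeasurableSpace Ω} {μ : Measure Ω}

lemma integral_sum_sq_of_pairwise_indepFun [IsProbabilityMeasure μ] {ι : Type*} {X : ι → Ω → ℝ}
    {s : Finset ι} (hX : ∀ i ∈ s, MemLp (X i) 2 μ)
    (hindep : Set.Pairwise s fun i j => X i ⟂ᵢ[μ] X j) {a b : ℝ}
    (ha : ∀ i ∈ s, ∫ ω, X i ω ∂μ = a) (hb : ∀ i ∈ s, ∫ ω, X i ω ^ 2 ∂μ = b) :
    ∫ ω, (∑ i ∈ s, X i ω) ^ 2 ∂μ = s.card * (b - a ^ 2) + (s.card * a) ^ 2 := by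
  have hmean : ∫ ω, ∑ i ∈ s, X i ω ∂μ = s.card * a := by
    rw [integral_finsetSum s fun i hi => (hX i hi).integrable one_le_two, Finset.sum_congr rfl ha,
      Finset.sum_const, nsmul_eq_mul]
  have hvar := IndepFun.variance_sum hX hindep
  rw [variance_eq_sub (memLp_finsetSum' s hX),
    Finset.sum_congr rfl fun i hi => variance_eq_sub (hX i hi)] at hvar
  simp only [Finset.sum_apply, Pi.pow_apply] at hvar
  rw [hmean, Finset.sum_congr rfl fun i hi => by rw [ha i hi, hb i hi], Finset.sum_const,
    nsmul_eq_mul] at hvar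
  linarith

lemma lintegral_comp_of_indepFun [IsFiniteMeasure μ] {β : Type*} [MeasurableSpace β]
    {N : Ω → ℕ} {Y : Ω → β} (hN : Measurable N) (hY : Measurable Y) (hind : N ⟂ᵢ[μ] Y)
    {g : ℕ → β → ℝ≥0∞} (hg : ∀ n, Measurable (g n)) :
    ∫⁻ ω, g (N ω) (Y ω) ∂μ = ∑' n, μ {ω | N ω = n} * ∫⁻ ω, g n (Y ω) ∂μ := by
  have hg' : Measurable fun z : ℕ × β => g z.1 z.2 := measurable_from_prod_countable_right hg
  calc ∫⁻ ω, g (N ω) (Y ω) ∂μ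
      = ∫⁻ z, g z.1 z.2 ∂(μ.map N).prod (μ.map Y) := by
        rw [← (indepFun_iff_map_prod_eq_prod_map_map hN.aemeasurable hY.aemeasurable).1 hind,
          lintegral_map hg' (hN.prodMk hY)]
    _ = ∑' n, (∫⁻ y, g n y ∂μ.map Y) * μ.map N {n} := by
        rw [lintegral_prod _ hg'.aemeasurable, lintegral_countable']
    _ = ∑' n, μ {ω | N ω = n} * ∫⁻ ω, g n (Y ω) ∂μ := by
        refine tsum_congr fun n => ?_
        rw [mul_comm, Measure.map_apply hN (measurableSet_singleton n), lintegral_map (hg n) hY]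
        rfl

lemma integral_comp_of_indepFun_of_geometric [IsFiniteMeasure μ] {β : Type*} [MeasurableSpace β]
    {N : Ω → ℕ} {Y : Ω → β} (hN : Measurable N) (hY : Measurable Y) (hind : N ⟂ᵢ[μ] Y)
    {q : ℝ} (hq0 : 0 ≤ q) (hq1 : q ≤ 1)
    (hNlaw : ∀ m, 1 ≤ m → μ {ω | N ω = m} = ENNReal.ofReal (q ^ (m - 1) * (1 - q)))
    {g : ℕ → β → ℝ} (hg : ∀ n, Measurable (g n)) (hg_nonneg : ∀ n y, 0 ≤ g n y)
    (hg_zero : ∀ y, g 0 y = 0) (hint : ∀ n, Integrable (fun ω => g n (Y ω)) μ) {V : ℝ}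
    (hV : HasSum (fun n : ℕ => q ^ n * (1 - q) * ∫ ω, g (n + 1) (Y ω) ∂μ) V) :
    ∫ ω, g (N ω) (Y ω) ∂μ = V := by
  have hweight : ∀ n : ℕ, 0 ≤ q ^ n * (1 - q) := fun n =>
    mul_nonneg (pow_nonneg hq0 n) (sub_nonneg.2 hq1)
  have hterm : ∀ n : ℕ, 0 ≤ q ^ n * (1 - q) * ∫ ω, g (n + 1) (Y ω) ∂μ := fun n =>
    mul_nonneg (hweight n) (integral_nonneg fun ω => hg_nonneg _ _)
  have hmeas : Measurable fun ω => g (N ω) (Y ω) :=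
    (measurable_from_prod_countable_right (f := fun z : ℕ × β => g z.1 z.2) hg).comp
      (hN.prodMk hY)
  rw [integral_eq_lintegral_of_nonneg_ae (ae_of_all _ fun ω => hg_nonneg _ _)
      hmeas.aestronglyMeasurable,
    lintegral_comp_of_indepFun hN hY hind (g := fun n y => ENNReal.ofReal (g n y))
      fun n => (hg n).ennreal_ofReal,
    tsum_eq_zero_add' ENNReal.summable]
  simp_rw [← ofReal_integral_eq_lintegral_ofReal (hint _) (ae_of_all _ fun ω => hg_nonneg _ _),
    hg_zero, integral_zero, ENNReal.ofReal_zero, mul_zero, zero_add,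
    hNlaw _ (Nat.le_add_left 1 _), Nat.add_sub_cancel, ← ENNReal.ofReal_mul (hweight _)]
  rw [← ENNReal.ofReal_tsum_of_nonneg hterm hV.summable, hV.tsum_eq,
    ENNReal.toReal_ofReal (hV.nonneg hterm)]

end Independence

section TruncatedExponentialSums

variable {Ω : Type*} {mΩ : MeasurableSpace Ω} {μ : Measure Ω} {γ : ℝ}

lemma memLp_max_of_map_eq_expMeasure_one {T : Ω → ℝ} (hT : Measurable T)
    (hlaw : μ.map T = expMeasure 1) (hγ : 0 ≤ γ) : MemLp (fun ω => max γ (T ω)) 2 μ := by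
  have hint := (integral_max_sq_expMeasure_one hγ).1
  rw [← hlaw, integrable_map_measure (by fun_prop) hT.aemeasurable] at hint
  exact (memLp_two_iff_integrable_sq (by fun_prop)).2 hint

lemma integral_max_of_map_eq_expMeasure_one {T : Ω → ℝ} (hT : Measurable T)
    (hlaw : μ.map T = expMeasure 1) (hγ : 0 ≤ γ) :
    ∫ ω, max γ (T ω) ∂μ = γ + exp (-γ) := by
  rw [← integral_max_expMeasure_one hγ, ← hlaw,
    integral_map hT.aemeasurable (by fun_prop)]

lemma integral_max_sq_of_map_eq_expMeasure_one {T : Ω → ℝ} (hT : Measurable T)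
    (hlaw : μ.map T = expMeasure 1) (hγ : 0 ≤ γ) :
    ∫ ω, max γ (T ω) ^ 2 ∂μ = γ ^ 2 + 2 * (γ + 1) * exp (-γ) := by
  rw [← (integral_max_sq_expMeasure_one hγ).2, ← hlaw,
    integral_map hT.aemeasurable (by fun_prop)]

variable {ι : Type*} {τ : ι → Ω → ℝ}

lemma integral_sum_max_of_map_eq_expMeasure_one [IsFiniteMeasure μ]
    (hmeas : ∀ i, Measurable (τ i)) (hlaw : ∀ i, μ.map (τ i) = expMeasure 1) (hγ : 0 ≤ γ)
    (s : Finset ι) :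
    ∫ ω, ∑ i ∈ s, max γ (τ i ω) ∂μ = s.card * (γ + exp (-γ)) := by
  rw [integral_finsetSum s fun i _ =>
      (memLp_max_of_map_eq_expMeasure_one (hmeas i) (hlaw i) hγ).integrable one_le_two,
    Finset.sum_congr rfl fun i _ => integral_max_of_map_eq_expMeasure_one (hmeas i) (hlaw i) hγ,
    Finset.sum_const, nsmul_eq_mul]

lemma integral_sum_max_sq_of_iIndepFun [IsProbabilityMeasure μ] (hmeas : ∀ i, Measurable (τ i))
    (hlaw : ∀ i, μ.map (τ i) = expMeasure 1) (hindep : iIndepFun τ μ) (hγ : 0 ≤ γ)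
    (s : Finset ι) :
    ∫ ω, (∑ i ∈ s, max γ (τ i ω)) ^ 2 ∂μ
      = s.card * (γ ^ 2 + 2 * (γ + 1) * exp (-γ) - (γ + exp (-γ)) ^ 2)
        + (s.card * (γ + exp (-γ))) ^ 2 :=
  integral_sum_sq_of_pairwise_indepFun
    (fun i _ => memLp_max_of_map_eq_expMeasure_one (hmeas i) (hlaw i) hγ)
    (fun i _ j _ hij => (hindep.comp (fun _ x => max γ x) fun _ => by fun_prop).indepFun hij)
    (fun i _ => integral_max_of_map_eq_expMeasure_one (hmeas i) (hlaw i) hγ)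
    (fun i _ => integral_max_sq_of_map_eq_expMeasure_one (hmeas i) (hlaw i) hγ)

end TruncatedExponentialSums

section Epoch

/-- The length `W₁ + ⋯ + Wₙ` of an epoch of `n` rounds, `Wᵣ = ∑ⱼ max γ (v (j, r))`, when `v` lists
the inter-arrival times of the energy packets. -/
def epochLength (γ : ℝ) (M n : ℕ) (v : Fin M × ℕ → ℝ) : ℝ :=
  ∑ p ∈ Finset.univ ×ˢ Finset.range n, max γ (v p)

variable {γ : ℝ} {M : ℕ}

lemma epochLength_eq_sum_range (n : ℕ) (v : Fin M × ℕ → ℝ) :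
    epochLength γ M n v = ∑ r ∈ Finset.range n, ∑ j : Fin M, max γ (v (j, r)) :=
  Finset.sum_product_right _ _ _

lemma epochLength_zero (v : Fin M × ℕ → ℝ) : epochLength γ M 0 v = 0 := by
  simp [epochLength]

lemma epochLength_nonneg (hγ : 0 ≤ γ) (n : ℕ) (v : Fin M × ℕ → ℝ) : 0 ≤ epochLength γ M n v :=
  Finset.sum_nonneg fun _ _ => hγ.trans (le_max_left _ _)

lemma measurable_epochLength (n : ℕ) : Measurable (epochLength γ M n) := by
  unfold epochLength
  fun_prop

lemma card_univ_product_range (n : ℕ) :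
    ((Finset.univ ×ˢ Finset.range n : Finset (Fin M × ℕ)).card : ℝ) = M * n := by
  simp

variable {Ω : Type*} {mΩ : MeasurableSpace Ω} {μ : Measure Ω} {τ : Fin M × ℕ → Ω → ℝ}

lemma memLp_epochLength (hmeas : ∀ p, Measurable (τ p)) (hlaw : ∀ p, μ.map (τ p) = expMeasure 1)
    (hγ : 0 ≤ γ) (n : ℕ) : MemLp (fun ω => epochLength γ M n fun p => τ p ω) 2 μ :=
  memLp_finsetSum _ fun p _ => memLp_max_of_map_eq_expMeasure_one (hmeas p) (hlaw p) hγ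

lemma integral_epochLength [IsFiniteMeasure μ] (hmeas : ∀ p, Measurable (τ p))
    (hlaw : ∀ p, μ.map (τ p) = expMeasure 1) (hγ : 0 ≤ γ) (n : ℕ) :
    ∫ ω, epochLength γ M n (fun p => τ p ω) ∂μ = M * n * (γ + exp (-γ)) := by
  rw [← card_univ_product_range]
  exact integral_sum_max_of_map_eq_expMeasure_one hmeas hlaw hγ _

lemma integral_epochLength_sq [IsProbabilityMeasure μ] (hmeas : ∀ p, Measurable (τ p))
    (hlaw : ∀ p, μ.map (τ p) = expMeasure 1) (hindep : iIndepFun τ μ) (hγ : 0 ≤ γ) (n : ℕ) :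
    ∫ ω, epochLength γ M n (fun p => τ p ω) ^ 2 ∂μ
      = M * n * (γ ^ 2 + 2 * (γ + 1) * exp (-γ) - (γ + exp (-γ)) ^ 2)
        + (M * n * (γ + exp (-γ))) ^ 2 := by
  rw [← card_univ_product_range]
  exact integral_sum_max_sq_of_iIndepFun hmeas hlaw hindep hγ _

variable {N : Ω → ℕ} {q : ℝ}

lemma integral_epochLength_geometric [IsFiniteMeasure μ] (hmeas : ∀ p, Measurable (τ p))
    (hlaw : ∀ p, μ.map (τ p) = expMeasure 1) (hγ : 0 ≤ γ) (hNmeas : Measurable N)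
    (hq0 : 0 ≤ q) (hq1 : q < 1)
    (hN : ∀ m, 1 ≤ m → μ {ω | N ω = m} = ENNReal.ofReal (q ^ (m - 1) * (1 - q)))
    (hNindep : N ⟂ᵢ[μ] fun ω p => τ p ω) :
    ∫ ω, epochLength γ M (N ω) (fun p => τ p ω) ∂μ = M * (γ + exp (-γ)) * (1 / (1 - q)) := by
  have hq : ‖q‖ < 1 := by
    rw [norm_eq_abs, abs_lt]
    constructor <;> linarith
  refine integral_comp_of_indepFun_of_geometric hNmeas (measurable_pi_lambda _ hmeas) hNindep
    hq0 hq1.le hN measurable_epochLength (epochLength_nonneg hγ) epochLength_zero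
    (fun n => (memLp_epochLength hmeas hlaw hγ n).integrable one_le_two) ?_
  simp_rw [integral_epochLength hmeas hlaw hγ]
  exact ((hasSum_mul_succ_geometric hq).mul_left _).congr_fun fun n => by push_cast; ring

lemma integral_epochLength_geometric_sq [IsProbabilityMeasure μ] (hmeas : ∀ p, Measurable (τ p))
    (hlaw : ∀ p, μ.map (τ p) = expMeasure 1) (hindep : iIndepFun τ μ) (hγ : 0 ≤ γ)
    (hNmeas : Measurable N) (hq0 : 0 ≤ q) (hq1 : q < 1)
    (hN : ∀ m, 1 ≤ m → μ {ω | N ω = m} = ENNReal.ofReal (q ^ (m - 1) * (1 - q)))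
    (hNindep : N ⟂ᵢ[μ] fun ω p => τ p ω) :
    ∫ ω, epochLength γ M (N ω) (fun p => τ p ω) ^ 2 ∂μ
      = M * (γ ^ 2 + 2 * (γ + 1) * exp (-γ) - (γ + exp (-γ)) ^ 2) * (1 / (1 - q))
        + (M * (γ + exp (-γ))) ^ 2 * ((1 + q) / (1 - q) ^ 2) := by
  have hq : ‖q‖ < 1 := by
    rw [norm_eq_abs, abs_lt]
    constructor <;> linarith
  refine integral_comp_of_indepFun_of_geometric hNmeas (measurable_pi_lambda _ hmeas) hNindep
    hq0 hq1.le hN (g := fun n v => epochLength γ M n v ^ 2)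
    (fun n => (measurable_epochLength n).pow_const 2) (fun _ _ => sq_nonneg _)
    (fun v => by rw [epochLength_zero, sq, zero_mul])
    (fun n => (memLp_epochLength hmeas hlaw hγ n).integrable_sq) ?_
  simp_rw [integral_epochLength_sq hmeas hlaw hindep hγ]
  exact (((hasSum_mul_succ_geometric hq).mul_left _).add
    ((hasSum_mul_succ_sq_geometric hq).mul_left _)).congr_fun fun n => by push_cast; ring

end Epoch

/-- Round-robin AoI (Theorem 5): with `(τ_{j,r})`, `j ∈ {1,…,M}`, `r ≥ 1`, i.i.d. exponential of
rate 1, `N` geometric on `{1,2,…}` with `P(N = m) = q^{m−1}(1−q)` independent of the `τ`'s,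
`W_r = Σ_{j=1}^M max(γ, τ_{j,r})` and `α = Σ_{r=1}^N W_r`, we have
`(E[α²]/2)/E[α] = [γ²/2 + (γ+1)e^{−γ}]/(γ + e^{−γ}) + ((M−1)/2 + Mq/(1−q))·(γ + e^{−γ})`. -/
theorem stmt15 {Ω : Type*} {mΩ : MeasurableSpace Ω} (μ : Measure Ω) [IsProbabilityMeasure μ]
    (q γ : ℝ) (hq0 : 0 < q) (hq1 : q < 1) (hγ : 0 ≤ γ)
    (M : ℕ) (hM : 1 ≤ M)
    (τ : Fin M × ℕ → Ω → ℝ) (hmeas : ∀ p, Measurable (τ p))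
    (hdist : ∀ p, μ.map (τ p) = expMeasure 1)
    (hindep : iIndepFun (m := fun _ => Real.measurableSpace) τ μ)
    (N : Ω → ℕ) (hNmeas : Measurable N)
    (hN : ∀ m : ℕ, 1 ≤ m → μ {ω | N ω = m} = ENNReal.ofReal (q ^ (m - 1) * (1 - q)))
    (hNindep : IndepFun N (fun ω => fun p => τ p ω) μ) :
    ((∫ ω, (∑ r ∈ Finset.range (N ω), ∑ j : Fin M, max γ (τ (j, r) ω)) ^ 2 ∂μ) / 2)
        / (∫ ω, ∑ r ∈ Finset.range (N ω), ∑ j : Fin M, max γ (τ (j, r) ω) ∂μ)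
      = (γ ^ 2 / 2 + (γ + 1) * Real.exp (-γ)) / (γ + Real.exp (-γ))
        + (((M : ℝ) - 1) / 2 + (M : ℝ) * q / (1 - q)) * (γ + Real.exp (-γ)) := by
  have hα : ∀ ω, ∑ r ∈ Finset.range (N ω), ∑ j : Fin M, max γ (τ (j, r) ω)
      = epochLength γ M (N ω) fun p => τ p ω := fun ω =>
    (epochLength_eq_sum_range (N ω) fun p => τ p ω).symm
  simp_rw [hα]
  rw [integral_epochLength_geometric_sq hmeas hdist hindep hγ hNmeas hq0.le hq1 hN hNindep,
    integral_epochLength_geometric hmeas hdist hγ hNmeas hq0.le hq1 hN hNindep]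
  have ha : 0 < γ + exp (-γ) := by positivity
  have hM' : (M : ℝ) ≠ 0 := Nat.cast_ne_zero.2 (by omega)
  have hq' : 1 - q ≠ 0 := by linarith
  field_simp
  ring
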